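/- arXiv:2104.02130 — 4 statements merged into one kernel-verified Lean document; each statement's English description precedes it below -/
import Mathlib

section
/- Let A be a C*-algebra and let τ : A → ℂ be a bounded linear functional. Assume that for j = 1, 2 there are a *-representation π_j : A → B(H_j) on a complex Hilbert space H_j and vectors ξ_j, η_j ∈ H_j with ‖ξ_j‖ = ‖η_j‖ = ‖τ‖^{1/2}, such that ξ_j is cyclic for π_j and ⟨π_1(t)ξ_1, η_1⟩ = τ(t) = ⟨π_2(t)ξ_2, η_2⟩ for every t ∈ A. Then there is a unitary operator U : H_1 → H_2 such that Uξ_1 = ξ_2, Uη_1 = η_2, and Uπ_1(t)U* = π_2(t) for every t ∈ A. -/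
/-!
Choose `u n` in the unit ball with `re τ (u n) → ‖τ‖`. Because `‖ξⱼ‖ = ‖ηⱼ‖ = ‖τ‖ ^ (1/2)` and
`πⱼ` is contractive, this is the equality case of Cauchy–Schwarz in the limit:
`πⱼ (u n) ξⱼ → ηⱼ` and `πⱼ (u n)⋆ ηⱼ → ξⱼ`. The second limit gives
`‖πⱼ t ξⱼ‖² = lim τ (u n t⋆ t)`, the same for `j = 1, 2`, so `π₁ t ξ₁ ↦ π₂ t ξ₂` extends to a
unitary intertwiner, and the two limits show that it carries `ξ₁, η₁` to `ξ₂, η₂`.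
-/

open Filter Topology

section Functional

variable {𝕜 E : Type*} [RCLike 𝕜] [NormedAddCommGroup E] [NormedSpace 𝕜 E]

theorem ContinuousLinearMap.exists_norm_le_one_lt_re_apply (τ : E →L[𝕜] 𝕜) {r : ℝ}
    (hr : r < ‖τ‖) : ∃ x : E, ‖x‖ ≤ 1 ∧ r < RCLike.re (τ x) := by
  obtain ⟨x, hx, hrx⟩ := τ.exists_lt_apply_of_lt_opNorm hr
  by_cases h0 : τ x = 0
  · exact ⟨0, by simp, by simpa [h0] using hrx⟩
  -- rotate `x` so that `τ x` becomes the positive real `‖τ x‖`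
  refine ⟨((‖τ x‖ : 𝕜) / τ x) • x, ?_, ?_⟩
  · rw [norm_smul, norm_div, RCLike.norm_ofReal, abs_norm, div_self (norm_ne_zero_iff.2 h0),
      one_mul]
    exact hx.le
  · rwa [map_smul, smul_eq_mul, div_mul_cancel₀ _ h0, RCLike.ofReal_re]

theorem ContinuousLinearMap.exists_tendsto_re_apply_nhds_norm (τ : E →L[𝕜] 𝕜) :
    ∃ u : ℕ → E, (∀ n, ‖u n‖ ≤ 1) ∧
      Tendsto (fun n => RCLike.re (τ (u n))) atTop (𝓝 ‖τ‖) := by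
  have hlt (n : ℕ) : ‖τ‖ - 1 / (n + 1) < ‖τ‖ := sub_lt_self _ Nat.one_div_pos_of_nat
  choose u hu_norm hu_re using fun n => τ.exists_norm_le_one_lt_re_apply (hlt n)
  refine ⟨u, hu_norm, tendsto_of_tendsto_of_tendsto_of_le_of_le ?_ tendsto_const_nhds
    (fun n => (hu_re n).le) fun n => ?_⟩
  · simpa using tendsto_const_nhds.sub (tendsto_one_div_add_atTop_nhds_zero_nat (𝕜 := ℝ))
  · exact (RCLike.re_le_norm _).trans (τ.unit_le_opNorm _ (hu_norm n))

end Functional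

theorem tendsto_of_norm_le_of_tendsto_re_inner {𝕜 E ι : Type*} [RCLike 𝕜]
    [NormedAddCommGroup E] [InnerProductSpace 𝕜 E] {l : Filter ι} {x : ι → E} {y : E}
    (hx : ∀ i, ‖x i‖ ≤ ‖y‖)
    (h : Tendsto (fun i => RCLike.re (inner 𝕜 (x i) y)) l (𝓝 (‖y‖ ^ 2))) :
    Tendsto x l (𝓝 y) := by
  rw [tendsto_iff_norm_sub_tendsto_zero]
  have hgap : Tendsto (fun i => 2 * (‖y‖ ^ 2 - RCLike.re (inner 𝕜 (x i) y))) l (𝓝 0) := by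
    have := ((tendsto_const_nhds (x := ‖y‖ ^ 2)).sub h).const_mul 2
    rwa [sub_self, mul_zero] at this
  refine squeeze_zero (fun _ => norm_nonneg _) (fun i => Real.le_sqrt_of_sq_le ?_)
    (by simpa only [Real.sqrt_zero] using hgap.sqrt)
  rw [@norm_sub_sq 𝕜]
  nlinarith [hx i, norm_nonneg (x i)]

section Extension

variable {𝕜 E F₁ F₂ : Type*} [NontriviallyNormedField 𝕜] [AddCommGroup E] [Module 𝕜 E]
  [NormedAddCommGroup F₁] [NormedSpace 𝕜 F₁] [CompleteSpace F₁]
  [NormedAddCommGroup F₂] [NormedSpace 𝕜 F₂] [CompleteSpace F₂]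

theorem LinearMap.exists_linearIsometryEquiv_comp_eq_of_norm_eq (e₁ : E →ₗ[𝕜] F₁)
    (e₂ : E →ₗ[𝕜] F₂) (h₁ : DenseRange e₁) (h₂ : DenseRange e₂) (h : ∀ x, ‖e₁ x‖ = ‖e₂ x‖) :
    ∃ U : F₁ ≃ₗᵢ[𝕜] F₂, ∀ x, U (e₁ x) = e₂ x := by
  let V := (LinearEquiv.refl 𝕜 E).extend e₁ e₂ h₁ ⟨1, fun x => by simp [h]⟩
    h₂ ⟨1, fun x => by simp [h]⟩
  have hV (x : E) : V (e₁ x) = e₂ x := LinearEquiv.extend_eq _ _ _ _ _ _ _ _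
  have hV_norm (y : F₁) : ‖V y‖ = ‖y‖ :=
    h₁.induction_on y (isClosed_eq (by fun_prop) continuous_norm) fun x => by rw [hV, h]
  exact ⟨{ V.toLinearEquiv with norm_map' := hV_norm }, hV⟩

def NonUnitalAlgHom.orbitMap {A F : Type*} [NonUnitalSemiring A] [Module 𝕜 A]
    [NormedAddCommGroup F] [NormedSpace 𝕜 F] (π : A →ₙₐ[𝕜] (F →L[𝕜] F)) (ξ : F) :
    A →ₗ[𝕜] F where
  toFun t := π t ξ
  map_add' s t := by simp
  map_smul' c t := by simp

theorem NonUnitalAlgHom.exists_linearIsometryEquiv_of_norm_apply_eq {A : Type*}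
    [NonUnitalRing A] [Module 𝕜 A]
    (π₁ : A →ₙₐ[𝕜] (F₁ →L[𝕜] F₁)) (π₂ : A →ₙₐ[𝕜] (F₂ →L[𝕜] F₂)) {ξ₁ : F₁} {ξ₂ : F₂}
    (hcyc₁ : DenseRange fun t => π₁ t ξ₁) (hcyc₂ : DenseRange fun t => π₂ t ξ₂)
    (h : ∀ t, ‖π₁ t ξ₁‖ = ‖π₂ t ξ₂‖) :
    ∃ U : F₁ ≃ₗᵢ[𝕜] F₂, (∀ t, U (π₁ t ξ₁) = π₂ t ξ₂) ∧
      ∀ t x, U (π₁ t x) = π₂ t (U x) := by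
  obtain ⟨U, hU⟩ := (π₁.orbitMap ξ₁).exists_linearIsometryEquiv_comp_eq_of_norm_eq
    (π₂.orbitMap ξ₂) hcyc₁ hcyc₂ h
  refine ⟨U, hU, fun t x => ?_⟩
  refine hcyc₁.induction_on x (isClosed_eq (by fun_prop) (by fun_prop)) fun v => ?_
  have hU' (s : A) : U (π₁ s ξ₁) = π₂ s ξ₂ := hU s
  rw [hU', ← mul_apply_eq_comp, ← map_mul, hU', ← mul_apply_eq_comp, ← map_mul]

end Extension

section StarRepresentation

variable {H : Type*} [NormedAddCommGroup H] [InnerProductSpace ℂ H] [CompleteSpace H]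

section Algebraic

variable {A : Type*} [NonUnitalSemiring A] [StarRing A] [Module ℂ A]
  (π : A →⋆ₙₐ[ℂ] (H →L[ℂ] H))

theorem NonUnitalStarAlgHom.inner_apply_left (s : A) (x y : H) :
    inner ℂ (π s x) y = inner ℂ x (π (star s) y) := by
  rw [map_star, ContinuousLinearMap.star_eq_adjoint, ContinuousLinearMap.adjoint_inner_right]

theorem NonUnitalStarAlgHom.tendsto_inner_mul_star_mul_self {ξ η : H} {u : ℕ → A}
    (hu : Tendsto (fun n => π (star (u n)) η) atTop (𝓝 ξ)) (t : A) :
    Tendsto (fun n => inner ℂ η (π (u n * (star t * t)) ξ)) atTop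
      (𝓝 ((‖π t ξ‖ : ℂ) ^ 2)) := by
  have hlim := (((π t).continuous.tendsto ξ).comp hu).inner (𝕜 := ℂ)
    (tendsto_const_nhds (x := π t ξ))
  rw [inner_self_eq_norm_sq_to_K (𝕜 := ℂ)] at hlim
  refine hlim.congr fun n => ?_
  simp only [Function.comp_apply, π.inner_apply_left, ← mul_apply_eq_comp, ← map_mul, star_mul,
    star_star, mul_assoc]

end Algebraic

section CStarAlgebra

variable {A : Type*} [NonUnitalCStarAlgebra A] (π : A →⋆ₙₐ[ℂ] (H →L[ℂ] H))

theorem NonUnitalStarAlgHom.norm_apply_apply_le {s : A} (hs : ‖s‖ ≤ 1) (x : H) :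
    ‖π s x‖ ≤ ‖x‖ :=
  ((π s).le_opNorm x).trans <|
    mul_le_of_le_one_left (norm_nonneg x) ((NonUnitalStarAlgHom.norm_apply_le π s).trans hs)

variable {τ : A →L[ℂ] ℂ} {ξ η : H} {u : ℕ → A}

theorem NonUnitalStarAlgHom.tendsto_apply_nhds_of_tendsto_re
    (hrep : ∀ t, inner ℂ η (π t ξ) = τ t)
    (hξ : ‖ξ‖ = √‖τ‖) (hη : ‖η‖ = √‖τ‖) (hu_norm : ∀ n, ‖u n‖ ≤ 1)
    (hu : Tendsto (fun n => RCLike.re (τ (u n))) atTop (𝓝 ‖τ‖)) :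
    Tendsto (fun n => π (u n) ξ) atTop (𝓝 η) := by
  refine tendsto_of_norm_le_of_tendsto_re_inner (𝕜 := ℂ)
    (fun n => (π.norm_apply_apply_le (hu_norm n) ξ).trans (hξ.trans hη.symm).le) ?_
  rw [hη, Real.sq_sqrt (norm_nonneg τ)]
  exact hu.congr fun n => by rw [inner_re_symm, hrep]

theorem NonUnitalStarAlgHom.tendsto_star_apply_nhds_of_tendsto_re
    (hrep : ∀ t, inner ℂ η (π t ξ) = τ t)
    (hξ : ‖ξ‖ = √‖τ‖) (hη : ‖η‖ = √‖τ‖) (hu_norm : ∀ n, ‖u n‖ ≤ 1)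
    (hu : Tendsto (fun n => RCLike.re (τ (u n))) atTop (𝓝 ‖τ‖)) :
    Tendsto (fun n => π (star (u n)) η) atTop (𝓝 ξ) := by
  refine tendsto_of_norm_le_of_tendsto_re_inner (𝕜 := ℂ) (fun n => (π.norm_apply_apply_le
    ((norm_star (u n)).trans_le (hu_norm n)) η).trans (hη.trans hξ.symm).le) ?_
  rw [hξ, Real.sq_sqrt (norm_nonneg τ)]
  exact hu.congr fun n => by rw [π.inner_apply_left, star_star, hrep]

end CStarAlgebra

end StarRepresentation

/-- Lemma 2.2 of the paper: uniqueness of Riesz-type representations of a bounded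
linear functional on a C*-algebra.  If `(π₁, ξ₁, η₁)` and `(π₂, ξ₂, η₂)` both represent
the functional `τ`, with `ξⱼ` cyclic and `‖ξⱼ‖ = ‖ηⱼ‖ = ‖τ‖ ^ (1/2)`, then there is a
unitary `U : H₁ → H₂` with `U ξ₁ = ξ₂`, `U η₁ = η₂` and `U π₁(t) U* = π₂(t)` for all `t`.
(In Mathlib's convention the inner product is conjugate-linear in the first variable, so
`inner ηⱼ (πⱼ t ξⱼ)` is the paper's `⟨πⱼ(t)ξⱼ, ηⱼ⟩`, linear in the first variable.) -/
theorem stmt_2 (A : Type*) [NonUnitalNormedRing A] [StarRing A] [CStarRing A]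
    [NormedSpace ℂ A] [IsScalarTower ℂ A A] [SMulCommClass ℂ A A] [StarModule ℂ A]
    [CompleteSpace A]
    (H₁ : Type*) [NormedAddCommGroup H₁] [InnerProductSpace ℂ H₁] [CompleteSpace H₁]
    (H₂ : Type*) [NormedAddCommGroup H₂] [InnerProductSpace ℂ H₂] [CompleteSpace H₂]
    (π₁ : A →⋆ₙₐ[ℂ] (H₁ →L[ℂ] H₁)) (π₂ : A →⋆ₙₐ[ℂ] (H₂ →L[ℂ] H₂))
    (τ : A →L[ℂ] ℂ)
    (ξ₁ η₁ : H₁) (ξ₂ η₂ : H₂)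
    (hξ₁ : ‖ξ₁‖ = Real.sqrt ‖τ‖) (hη₁ : ‖η₁‖ = Real.sqrt ‖τ‖)
    (hξ₂ : ‖ξ₂‖ = Real.sqrt ‖τ‖) (hη₂ : ‖η₂‖ = Real.sqrt ‖τ‖)
    (hcyc₁ : Dense (Set.range fun t : A => π₁ t ξ₁))
    (hcyc₂ : Dense (Set.range fun t : A => π₂ t ξ₂))
    (hrep₁ : ∀ t : A, (inner ℂ η₁ (π₁ t ξ₁) : ℂ) = τ t)
    (hrep₂ : ∀ t : A, τ t = (inner ℂ η₂ (π₂ t ξ₂) : ℂ)) :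
    ∃ U : H₁ ≃ₗᵢ[ℂ] H₂, U ξ₁ = ξ₂ ∧ U η₁ = η₂ ∧
      ∀ (t : A) (x : H₁), U (π₁ t x) = π₂ t (U x) := by
  -- bundle the instance arguments, so that `π₁` and `π₂` are known to be contractive
  let _ : NonUnitalCStarAlgebra A := {}
  replace hrep₂ t := (hrep₂ t).symm
  obtain ⟨u, hu_norm, hu⟩ := τ.exists_tendsto_re_apply_nhds_norm
  have hη₁_lim := π₁.tendsto_apply_nhds_of_tendsto_re hrep₁ hξ₁ hη₁ hu_norm hu
  have hη₂_lim := π₂.tendsto_apply_nhds_of_tendsto_re hrep₂ hξ₂ hη₂ hu_norm hu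
  have hξ₁_lim := π₁.tendsto_star_apply_nhds_of_tendsto_re hrep₁ hξ₁ hη₁ hu_norm hu
  have hξ₂_lim := π₂.tendsto_star_apply_nhds_of_tendsto_re hrep₂ hξ₂ hη₂ hu_norm hu
  have hnorm (t : A) : ‖π₁ t ξ₁‖ = ‖π₂ t ξ₂‖ := by
    have hsq := tendsto_nhds_unique
      ((π₁.tendsto_inner_mul_star_mul_self hξ₁_lim t).congr fun _ => hrep₁ _)
      ((π₂.tendsto_inner_mul_star_mul_self hξ₂_lim t).congr fun _ => hrep₂ _)
    exact (sq_eq_sq₀ (norm_nonneg _) (norm_nonneg _)).1 (by exact_mod_cast hsq)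
  obtain ⟨U, hU, hUπ⟩ := π₁.toNonUnitalAlgHom.exists_linearIsometryEquiv_of_norm_apply_eq
    π₂.toNonUnitalAlgHom hcyc₁ hcyc₂ hnorm
  have hUη : U η₁ = η₂ :=
    tendsto_nhds_unique (((U.continuous.tendsto η₁).comp hη₁_lim).congr fun n => hU (u n)) hη₂_lim
  have hUξ : U ξ₁ = ξ₂ := tendsto_nhds_unique
    (((U.continuous.tendsto ξ₁).comp hξ₁_lim).congr fun n => by rw [← hUη]; exact hUπ _ _) hξ₂_lim
  exact ⟨U, hUξ, hUη, hUπ⟩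
end

section
/- Let d ≥ 1 be an integer. For every a, b ∈ A_d and every compact operator K on 𝔉²_d, one has ‖a + b* + K‖ ≥ ‖a + b*‖; equivalently, the distance in operator norm from any element of the free disc operator system S_d to the space of compact operators on 𝔉²_d equals its operator norm. -/
/-!
Right multiplication by a word `w` gives an isometry `R_w` of the Fock space commuting with the
left shifts, hence with `A_d`, so `R_w* T R_w = T` for `T = a + b*`. As `|w| → ∞`, `R_w ξ → 0`
weakly (`R_w*` kills `e_v` once `|w| > |v|`), so `K R_w ξ → 0` in norm for compact `K`, and
`T ξ = R_w* (T + K) R_w ξ - R_w* K R_w ξ` yields `‖T ξ‖ ≤ ‖T + K‖ ‖ξ‖`.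
-/

open Filter Topology ContinuousLinearMap
open scoped InnerProductSpace

theorem tendsto_apply_zero_of_dense_span {ι 𝕜 E F : Type*} [NontriviallyNormedField 𝕜]
    [NormedAddCommGroup E] [NormedSpace 𝕜 E] [NormedAddCommGroup F] [NormedSpace 𝕜 F]
    {l : Filter ι} {A : ι → E →L[𝕜] F} (hA : ∃ C, ∀ i, ‖A i‖ ≤ C) {s : Set E}
    (hs : Dense (Submodule.span 𝕜 s : Set E)) (h0 : ∀ x ∈ s, Tendsto (fun i => A i x) l (𝓝 0))
    (y : E) : Tendsto (fun i => A i y) l (𝓝 0) := by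
  let S : Submodule 𝕜 E :=
    { carrier := {y | Tendsto (fun i => A i y) l (𝓝 0)}
      add_mem' := fun hx hy => by simpa using hx.add hy
      zero_mem' := by simpa using tendsto_const_nhds
      smul_mem' := fun c x hx => by simpa using hx.const_smul c }
  have hS : IsClosed (S : Set E) :=
    Equicontinuous.isClosed_setOfPred_tendsto (((NormedSpace.equicontinuous_TFAE A).out 5 1).mp hA)
      (f := fun _ => (0 : F)) continuous_const
  exact hS.closure_subset_iff.mpr (Submodule.span_le.mpr h0) (hs y)

section

variable {𝕜 E : Type*} [RCLike 𝕜] [NormedAddCommGroup E] [InnerProductSpace 𝕜 E] [CompleteSpace E]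

theorem IsCompactOperator.tendsto_apply_zero_of_weakly_null {K : E →L[𝕜] E}
    (hK : IsCompactOperator K) {x : ℕ → E} (hx : Bornology.IsBounded (Set.range x))
    (hw : ∀ y, Tendsto (fun n => ⟪x n, y⟫_𝕜) atTop (𝓝 0)) :
    Tendsto (fun n => K (x n)) atTop (𝓝 0) := by
  obtain ⟨C, hC, hKC⟩ := hK.image_subset_compact_of_bounded hx
  refine tendsto_of_subseq_tendsto fun φ hφ => ?_
  obtain ⟨z, -, ψ, hψ, hz⟩ := hC.tendsto_subseq fun n => hKC ⟨x (φ n), ⟨φ n, rfl⟩, rfl⟩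
  suffices z = 0 by exact ⟨ψ, this ▸ hz⟩
  have h0 : Tendsto (fun n => ⟪K (x (φ (ψ n))), z⟫_𝕜) atTop (𝓝 0) := by
    simp_rw [← adjoint_inner_right]
    exact (hw (adjoint K z)).comp (hφ.comp hψ.tendsto_atTop)
  exact inner_self_eq_zero.mp (tendsto_nhds_unique (hz.inner tendsto_const_nhds) h0)

theorem norm_le_norm_add_of_isCompactOperator_of_compressions {T K : E →L[𝕜] E}
    (hK : IsCompactOperator K) {V : ℕ → E →L[𝕜] E} (hV : ∀ n, ‖V n‖ ≤ 1)
    (hVT : ∀ n, star (V n) * T * V n = T)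
    (hV0 : ∀ ξ y, Tendsto (fun n => ⟪V n ξ, y⟫_𝕜) atTop (𝓝 0)) :
    ‖T‖ ≤ ‖T + K‖ := by
  refine T.opNorm_le_bound (norm_nonneg _) fun ξ => ?_
  have hVξ : ∀ n, ‖V n ξ‖ ≤ ‖ξ‖ := fun n => by
    simpa using (V n).le_of_opNorm_le (hV n) ξ
  have hstar : ∀ n z, ‖star (V n) z‖ ≤ ‖z‖ :=
    fun n z => by simpa using (star (V n)).le_of_opNorm_le ((norm_star _).trans_le (hV n)) z
  have hKV : Tendsto (fun n => ‖K (V n ξ)‖) atTop (𝓝 0) := by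
    simpa using (hK.tendsto_apply_zero_of_weakly_null
      (isBounded_iff_forall_norm_le.mpr ⟨‖ξ‖, by simpa using hVξ⟩) (hV0 ξ)).norm
  have hle : ∀ n, ‖T ξ‖ ≤ ‖T + K‖ * ‖ξ‖ + ‖K (V n ξ)‖ := fun n => by
    have hTξ : T ξ = star (V n) ((T + K) (V n ξ)) - star (V n) (K (V n ξ)) := by
      rw [← map_sub, add_apply, add_sub_cancel_right]
      exact (congrArg (· ξ) (hVT n)).symm
    calc ‖T ξ‖ ≤ ‖(T + K) (V n ξ)‖ + ‖K (V n ξ)‖ := by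
          rw [hTξ]
          exact (norm_sub_le _ _).trans (add_le_add (hstar n _) (hstar n _))
      _ ≤ ‖T + K‖ * ‖ξ‖ + ‖K (V n ξ)‖ := by
          gcongr
          exact ((T + K).le_opNorm _).trans (by gcongr; exact hVξ n)
  exact ge_of_tendsto' (by simpa using tendsto_const_nhds.add hKV) hle

end

theorem star_mul_add_star_mul_eq_of_commute {A : Type*} [Ring A] [StarRing A] {v a b : A}
    (hv : star v * v = 1) (ha : Commute a v) (hb : Commute b v) :
    star v * (a + star b) * v = a + star b := by
  have hconj : ∀ x : A, Commute x v → star v * x * v = x := fun x hx => by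
    rw [mul_assoc, hx.eq, ← mul_assoc, hv, one_mul]
  have hb' : star v * star b * v = star b := by
    simpa [mul_assoc] using congrArg star (hconj b hb)
  rw [mul_add, add_mul, hconj a ha, hb']

theorem LinearIsometry.star_toContinuousLinearMap_mul_self {𝕜 E : Type*} [RCLike 𝕜]
    [NormedAddCommGroup E] [InnerProductSpace 𝕜 E] [CompleteSpace E] (V : E →ₗᵢ[𝕜] E) :
    star V.toContinuousLinearMap * V.toContinuousLinearMap = 1 :=
  (norm_map_iff_adjoint_comp_self _).mp V.norm_map

namespace HilbertBasis

variable {𝕜 E : Type*} [RCLike 𝕜] [NormedAddCommGroup E] [InnerProductSpace 𝕜 E]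

theorem eq_zero_of_forall_inner {ι : Type*} (e : HilbertBasis ι 𝕜 E) {x : E}
    (h : ∀ i, ⟪e i, x⟫_𝕜 = 0) : x = 0 :=
  e.repr.map_eq_zero_iff.mp (lp.ext (funext fun i => by simp [e.repr_apply_apply, h]))

variable [CompleteSpace E]

section RightShift

variable {M : Type*} [Monoid M] [IsRightCancelMul M]

noncomputable def rightShift (e : HilbertBasis M 𝕜 E) (w : M) : E →ₗᵢ[𝕜] E :=
  (e.orthonormal.comp (· * w) (mul_left_injective w)).orthogonalFamily.linearIsometry.comp
    e.repr.toLinearIsometry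

theorem rightShift_apply (e : HilbertBasis M 𝕜 E) (w u : M) :
    e.rightShift w (e u) = e (u * w) := by
  classical
  simp [rightShift, e.repr_self, LinearIsometry.toSpanSingleton_apply]

theorem commute_rightShift_of_mem_topologicalClosure_adjoin {J : Type*} (e : HilbertBasis M 𝕜 E)
    {g : J → M} {L : J → E →L[𝕜] E} (hL : ∀ j u, L j (e u) = e (g j * u)) (w : M)
    {x : E →L[𝕜] E} (hx : x ∈ (Algebra.adjoin 𝕜 (Set.range L)).topologicalClosure) :
    Commute x (e.rightShift w).toContinuousLinearMap := by
  have hR : (e.rightShift w).toContinuousLinearMap ∈ Subalgebra.centralizer 𝕜 (Set.range L) := by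
    rw [Subalgebra.mem_centralizer_iff]
    rintro _ ⟨j, rfl⟩
    refine ContinuousLinearMap.ext_on
      (Submodule.dense_iff_topologicalClosure_eq_top.mpr e.dense_span) ?_
    rintro _ ⟨u, rfl⟩
    simp [hL, rightShift_apply, mul_assoc]
  exact ((Subalgebra.topologicalClosure_adjoin_le_centralizer_centralizer 𝕜 _ hx) _ hR).symm

end RightShift

variable {α : Type*}

theorem star_rightShift_apply_eq_zero (e : HilbertBasis (FreeMonoid α) 𝕜 E)
    {w v : FreeMonoid α} (h : v.length < w.length) :
    star (e.rightShift w).toContinuousLinearMap (e v) = 0 := by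
  refine e.eq_zero_of_forall_inner fun u => ?_
  rw [star_eq_adjoint, adjoint_inner_right, LinearIsometry.coe_toContinuousLinearMap,
    rightShift_apply]
  refine e.orthonormal.2 fun huv => ?_
  subst huv
  simp at h

theorem tendsto_inner_rightShift_zero (e : HilbertBasis (FreeMonoid α) 𝕜 E)
    {w : ℕ → FreeMonoid α} (hw : Tendsto (fun n => (w n).length) atTop atTop) (ξ y : E) :
    Tendsto (fun n => ⟪e.rightShift (w n) ξ, y⟫_𝕜) atTop (𝓝 0) := by
  have hstar := tendsto_apply_zero_of_dense_span
    (A := fun n => star (e.rightShift (w n)).toContinuousLinearMap)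
    ⟨1, fun n => (norm_star _).trans_le (LinearIsometry.norm_toContinuousLinearMap_le _)⟩
    (Submodule.dense_iff_topologicalClosure_eq_top.mpr e.dense_span)
    (by
      rintro _ ⟨v, rfl⟩
      exact tendsto_const_nhds.congr' ((hw.eventually_gt_atTop v.length).mono
        fun n hn => (e.star_rightShift_apply_eq_zero hn).symm))
    y
  simpa [star_eq_adjoint, adjoint_inner_right] using
    (tendsto_const_nhds (x := ξ)).inner (𝕜 := 𝕜) hstar

end HilbertBasis

/-- The isometric part of Lemma 2.3 of the paper: on the full Fock space `F = ℓ²(F_d⁺)`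
(presented abstractly via a Hilbert basis `e` indexed by the free monoid `F_d⁺` on `d`
generators, with left free shifts `L j` satisfying `L j (e w) = e (j·w)`), every element
`a + b*` of the free disc operator system `S_d` (with `a, b` in the norm-closed unital
algebra `A_d` generated by the shifts) is at distance `‖a + b*‖` from the compact
operators: `‖a + b* + K‖ ≥ ‖a + b*‖` for every compact operator `K`. -/
theorem stmt_5 (d : ℕ) (hd : 1 ≤ d)
    (F : Type*) [NormedAddCommGroup F] [InnerProductSpace ℂ F] [CompleteSpace F]
    (e : HilbertBasis (FreeMonoid (Fin d)) ℂ F)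
    (L : Fin d → F →L[ℂ] F)
    (hL : ∀ (j : Fin d) (w : FreeMonoid (Fin d)), L j (e w) = e (FreeMonoid.of j * w))
    (a b : F →L[ℂ] F)
    (ha : a ∈ (Algebra.adjoin ℂ (Set.range L)).topologicalClosure)
    (hb : b ∈ (Algebra.adjoin ℂ (Set.range L)).topologicalClosure)
    (K : F →L[ℂ] F) (hK : IsCompactOperator K) :
    ‖a + star b‖ ≤ ‖a + star b + K‖ := by
  let w : ℕ → FreeMonoid (Fin d) := fun n => .ofList (List.replicate n ⟨0, hd⟩)
  have hw : Tendsto (fun n => (w n).length) atTop atTop := by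
    simp only [w, FreeMonoid.length, FreeMonoid.toList_ofList, List.length_replicate]
    exact tendsto_id
  refine norm_le_norm_add_of_isCompactOperator_of_compressions hK
    (fun n => (e.rightShift (w n)).norm_toContinuousLinearMap_le) (fun n => ?_)
    (e.tendsto_inner_rightShift_zero hw)
  exact star_mul_add_star_mul_eq_of_commute
    (e.rightShift (w n)).star_toContinuousLinearMap_mul_self
    (e.commute_rightShift_of_mem_topologicalClosure_adjoin hL _ ha)
    (e.commute_rightShift_of_mem_topologicalClosure_adjoin hL _ hb)
end

section
/- Let d ≥ 2 be an integer. There exists a bounded linear functional φ : S_d → ℂ with the following properties: (i) φ(a) = 0 for every a ∈ A_d; (ii) φ((L_2 L_1^n)*) = 1 for every integer n ≥ 1; and (iii) the sequence (L_2 L_1^n)_{n≥1} converges to 0 in the weak operator topology, i.e. lim_{n→∞} ⟨L_2 L_1^n x, y⟩ = 0 for all x, y ∈ 𝔉²_d. In particular, φ annihilates A_d but does not admit a weak-* continuous extension to the weak-* closure of S_d. -/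
/-!
For letters `i ≠ j` let `ψ_N(T) = N⁻¹ ⟪∑_{k<N} e_{j^k}, T (∑_{k<N} e_{i j^k})⟫`. Both vectors have
norm `√N`, so `‖ψ_N‖ ≤ 1`, and by Banach–Alaoglu the `ψ_N` have a weak-* cluster point `φ`. Every
operator in the closed algebra generated by the shifts leaves invariant the closed span of the `e_w`
with `w` containing the letter `i`, and the first vector is orthogonal to that span, so `ψ_N`
vanishes on `A_d`. On the other hand `ψ_N((L_i L_j^n)*) = (N - n) / N → 1`. Finally
`(L_i L_j^n)* e_w = 0` as soon as `n ≥ |w|`, and these operators are contractions, so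
`(L_i L_j^n)* → 0` strongly, that is `L_i L_j^n → 0` in the weak operator topology.
-/

open Filter Topology InnerProductSpace

section InnerProductSpace

variable {ι 𝕜 E F : Type*} [RCLike 𝕜] [NormedAddCommGroup E] [InnerProductSpace 𝕜 E]
  [NormedAddCommGroup F] [InnerProductSpace 𝕜 F]

theorem HilbertBasis.norm_map_of_orthonormal [CompleteSpace F] (b : HilbertBasis ι 𝕜 E)
    {T : E →L[𝕜] F} (hT : Orthonormal 𝕜 (T ∘ b)) (x : E) : ‖T x‖ = ‖x‖ := by
  classical
  let V : E →ₗᵢ[𝕜] F := hT.orthogonalFamily.linearIsometry.comp b.repr.toLinearIsometry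
  have hTV : T = V.toContinuousLinearMap := by
    refine ContinuousLinearMap.ext_on
      (Submodule.dense_iff_topologicalClosure_eq_top.mpr b.dense_span) ?_
    rintro _ ⟨i, rfl⟩
    simp [V, b.repr_self]
  rw [hTV]
  exact V.norm_map x

theorem Orthonormal.inner_sum_sum [DecidableEq ι] {v : ι → E} (hv : Orthonormal 𝕜 v)
    (s t : Finset ι) : ⟪∑ i ∈ s, v i, ∑ i ∈ t, v i⟫_𝕜 = (s ∩ t).card := by
  simp [sum_inner, inner_sum, orthonormal_iff_ite.mp hv, Finset.inter_comm]

theorem Orthonormal.norm_sum [DecidableEq ι] {v : ι → E} (hv : Orthonormal 𝕜 v)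
    (s : Finset ι) : ‖∑ i ∈ s, v i‖ = √s.card := by
  rw [@norm_eq_sqrt_re_inner 𝕜, hv.inner_sum_sum, Finset.inter_self]
  simp

theorem Orthonormal.inner_eq_zero_of_mem_closure_span {v : ι → E} (hv : Orthonormal 𝕜 v)
    {S : Set ι} {i : ι} (hi : i ∉ S) {x : E}
    (hx : x ∈ (Submodule.span 𝕜 (v '' S)).topologicalClosure) : ⟪v i, x⟫_𝕜 = 0 := by
  have hker : (Submodule.span 𝕜 (v '' S)).topologicalClosure ≤ (innerSL 𝕜 (v i)).ker := by
    refine Submodule.topologicalClosure_minimal _ ?_ (innerSL 𝕜 (v i)).isClosed_ker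
    rw [Submodule.span_le]
    rintro _ ⟨j, hj, rfl⟩
    exact hv.2 (by rintro rfl; exact hi hj)
  exact hker hx

end InnerProductSpace

section NormedSpace

variable {ι 𝕜 E F : Type*} [NontriviallyNormedField 𝕜] [NormedAddCommGroup E] [NormedSpace 𝕜 E]
  [NormedAddCommGroup F] [NormedSpace 𝕜 F]

theorem ContinuousLinearMap.tendsto_nhds_zero_of_dense_span {l : Filter ι}
    {A : ι → E →L[𝕜] F} {C : ℝ} (hA : ∀ i, ‖A i‖ ≤ C) {s : Set E}
    (hs : Dense (Submodule.span 𝕜 s : Set E)) (h : ∀ x ∈ s, Tendsto (fun i => A i x) l (𝓝 0))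
    (x : E) : Tendsto (fun i => A i x) l (𝓝 0) := by
  let S : Submodule 𝕜 E :=
    { carrier := {x | Tendsto (fun i => A i x) l (𝓝 0)}
      add_mem' := fun hx hy => by simpa using hx.add hy
      zero_mem' := by simp [tendsto_const_nhds]
      smul_mem' := fun c x hx => by simpa using hx.const_smul c }
  have hequi := (NormedSpace.equicontinuous_TFAE A).out 1 5
  have hclosed : IsClosed (S : Set E) :=
    (hequi.2 ⟨C, hA⟩).isClosed_setOfPred_tendsto (f := fun _ => 0) continuous_const
  exact closure_minimal (Submodule.span_le.2 h : Submodule.span 𝕜 s ≤ S) hclosed (hs x)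

theorem StrongDual.exists_eq_of_tendsto_of_norm_le [ProperSpace 𝕜] {l : Filter ι} [l.NeBot]
    (ψ : ι → StrongDual 𝕜 E) {C : ℝ} (hψ : ∀ i, ‖ψ i‖ ≤ C) :
    ∃ φ : StrongDual 𝕜 E, ∀ x c, Tendsto (fun i => ψ i x) l (𝓝 c) → φ x = c := by
  obtain ⟨φ, -, hφ⟩ := WeakDual.isCompact_closedBall (𝕜 := 𝕜) (E := E) 0 C
    (f := map (fun i => StrongDual.toWeakDual (ψ i)) l)
    (le_principal_iff.2 (Eventually.of_forall fun i => by simpa using hψ i : ∀ᶠ i in l, _))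
  refine ⟨WeakDual.toStrongDual φ, fun x c hc => ?_⟩
  have hx : MapClusterPt (φ x) l (fun i => ψ i x) :=
    MapClusterPt.continuousAt_comp (WeakDual.eval_continuous x).continuousAt hφ
  exact eq_of_nhds_neBot (ClusterPt.mono hx hc).neBot

def ContinuousLinearMap.invariantSubalgebra (K : Submodule 𝕜 E) : Subalgebra 𝕜 (E →L[𝕜] E) where
  carrier := {T | ∀ x ∈ K, T x ∈ K}
  mul_mem' hS hT x hx := hS _ (hT x hx)
  add_mem' hS hT x hx := K.add_mem (hS x hx) (hT x hx)
  algebraMap_mem' c x hx := by simpa [Algebra.algebraMap_eq_smul_one] using K.smul_mem c hx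

theorem ContinuousLinearMap.isClosed_invariantSubalgebra {K : Submodule 𝕜 E}
    (hK : IsClosed (K : Set E)) : IsClosed (invariantSubalgebra K : Set (E →L[𝕜] E)) := by
  have hK' : (invariantSubalgebra K : Set (E →L[𝕜] E)) =
      ⋂ x ∈ K, (fun T : E →L[𝕜] E => T x) ⁻¹' K := by
    ext T
    simp only [Set.mem_iInter, Set.mem_preimage, SetLike.mem_coe]
    rfl
  rw [hK']
  exact isClosed_biInter fun x _ => hK.preimage (ContinuousLinearMap.apply 𝕜 E x).continuous

end NormedSpace

theorem tendsto_natCast_sub_div_atTop {𝕜 : Type*} [RCLike 𝕜] (n : ℕ) :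
    Tendsto (fun N : ℕ => ((N - n : ℕ) : 𝕜) / N) atTop (𝓝 1) := by
  refine ((tendsto_natCast_div_add_atTop (n : 𝕜)).comp (tendsto_sub_atTop_nat n)).congr'
    (eventually_atTop.2 ⟨n, fun N hN => ?_⟩)
  simp [Nat.cast_sub hN]

theorem FreeMonoid.length_pow {α : Type*} (a : FreeMonoid α) (n : ℕ) :
    (a ^ n).length = n * a.length := by
  induction n with
  | zero => simp
  | succ n ih => rw [pow_succ, length_mul, ih, Nat.succ_mul]

theorem FreeMonoid.mem_of_mem_pow {α : Type*} {m : α} {a : FreeMonoid α} {n : ℕ}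
    (h : m ∈ a ^ n) : m ∈ a := by
  induction n with
  | zero => exact absurd h notMem_one
  | succ n ih =>
    rw [pow_succ, mem_mul] at h
    exact h.elim ih id

namespace FreeShift

open FreeMonoid Finset ContinuousLinearMap

variable {d : ℕ} {F : Type*} [NormedAddCommGroup F] [InnerProductSpace ℂ F]
  {e : HilbertBasis (FreeMonoid (Fin d)) ℂ F} {L : Fin d → F →L[ℂ] F}

theorem orthonormal_pow (j : Fin d) : Orthonormal ℂ fun k : ℕ => e (of j ^ k) :=
  e.orthonormal.comp _ fun k l h => by simpa [length_pow] using congrArg length h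

theorem orthonormal_mul_pow (i j : Fin d) : Orthonormal ℂ fun k : ℕ => e (of i * of j ^ k) :=
  e.orthonormal.comp _ fun k l h => by simpa [length_pow] using congrArg length h

variable (e) in
def closedSpanContaining (i : Fin d) : Submodule ℂ F :=
  (Submodule.span ℂ (e '' {w | i ∈ w})).topologicalClosure

variable (e) in
noncomputable def averagedCoeff (i j : Fin d) (N : ℕ) : StrongDual ℂ (F →L[ℂ] F) :=
  (N : ℂ)⁻¹ • (innerSL ℂ (∑ k ∈ range N, e (of j ^ k))).comp
    (ContinuousLinearMap.apply ℂ F (∑ k ∈ range N, e (of i * of j ^ k)))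

theorem averagedCoeff_apply (i j : Fin d) (N : ℕ) (T : F →L[ℂ] F) :
    averagedCoeff e i j N T =
      (N : ℂ)⁻¹ * ⟪∑ k ∈ range N, e (of j ^ k), T (∑ k ∈ range N, e (of i * of j ^ k))⟫_ℂ :=
  rfl

theorem norm_averagedCoeff_le (i j : Fin d) (N : ℕ) : ‖averagedCoeff e i j N‖ ≤ 1 := by
  refine opNorm_le_bound _ zero_le_one fun T => ?_
  rw [averagedCoeff_apply, norm_mul, norm_inv, Complex.norm_natCast, one_mul]
  calc (N : ℝ)⁻¹ * ‖⟪∑ k ∈ range N, e (of j ^ k), T (∑ k ∈ range N, e (of i * of j ^ k))⟫_ℂ‖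
      ≤ (N : ℝ)⁻¹ * (√N * (‖T‖ * √N)) := by
        gcongr
        refine (norm_inner_le_norm _ _).trans ?_
        rw [(orthonormal_pow j).norm_sum, card_range]
        gcongr
        refine (T.le_opNorm _).trans_eq ?_
        rw [(orthonormal_mul_pow i j).norm_sum, card_range]
    _ = (N : ℝ)⁻¹ * (√N * √N) * ‖T‖ := by ring
    _ = (N : ℝ)⁻¹ * N * ‖T‖ := by rw [Real.mul_self_sqrt N.cast_nonneg]
    _ ≤ ‖T‖ := by
        rcases eq_or_ne (N : ℝ) 0 with h | h <;> simp [h]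

section Shift

variable (hL : ∀ (j : Fin d) (w : FreeMonoid (Fin d)), L j (e w) = e (FreeMonoid.of j * w))
include hL

theorem pow_apply_basis (j : Fin d) (n : ℕ) (w : FreeMonoid (Fin d)) :
    (L j ^ n) (e w) = e (of j ^ n * w) := by
  induction n generalizing w with
  | zero => simp
  | succ n ih => rw [pow_succ, mul_apply_eq_comp, hL, ih, ← mul_assoc, ← pow_succ]

theorem mul_pow_apply_basis (i j : Fin d) (n : ℕ) (w : FreeMonoid (Fin d)) :
    (L i * L j ^ n) (e w) = e (of i * of j ^ n * w) := by
  rw [mul_apply_eq_comp, pow_apply_basis hL, hL, mul_assoc]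

theorem topologicalClosure_adjoin_le_invariantSubalgebra (i : Fin d) :
    (Algebra.adjoin ℂ (Set.range L)).topologicalClosure ≤
      invariantSubalgebra (closedSpanContaining e i) := by
  refine Subalgebra.topologicalClosure_minimal (Algebra.adjoin_le ?_)
    (isClosed_invariantSubalgebra (Submodule.isClosed_topologicalClosure _))
  rintro _ ⟨j, rfl⟩ x hx
  have hspan : Submodule.span ℂ (e '' {w | i ∈ w}) ≤
      (closedSpanContaining e i).comap (L j : F →ₗ[ℂ] F) := by
    rw [Submodule.span_le]
    rintro _ ⟨w, hw, rfl⟩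
    refine Submodule.le_topologicalClosure _ (Submodule.subset_span ⟨of j * w, ?_, (hL j w).symm⟩)
    exact mem_mul.2 (Or.inr hw)
  exact Submodule.topologicalClosure_minimal _ hspan
    ((Submodule.isClosed_topologicalClosure _).preimage (L j).continuous) hx

theorem averagedCoeff_eq_zero {i j : Fin d} (hij : i ≠ j) {a : F →L[ℂ] F}
    (ha : a ∈ (Algebra.adjoin ℂ (Set.range L)).topologicalClosure) (N : ℕ) :
    averagedCoeff e i j N a = 0 := by
  have hG : ∑ k ∈ range N, e (of i * of j ^ k) ∈ closedSpanContaining e i :=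
    Submodule.sum_mem _ fun k _ => Submodule.le_topologicalClosure _
      (Submodule.subset_span ⟨_, mem_mul.2 (Or.inl mem_of_self), rfl⟩)
  have haG := topologicalClosure_adjoin_le_invariantSubalgebra hL i ha _ hG
  have hperp (k : ℕ) : ⟪e (of j ^ k), a (∑ k ∈ range N, e (of i * of j ^ k))⟫_ℂ = 0 :=
    e.orthonormal.inner_eq_zero_of_mem_closure_span
      (fun h => hij (mem_of.1 (mem_of_mem_pow h))) haG
  simp only [averagedCoeff_apply, sum_inner, hperp, sum_const_zero, mul_zero]

variable [CompleteSpace F]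

theorem norm_mul_pow_le_one (i j : Fin d) (n : ℕ) : ‖L i * L j ^ n‖ ≤ 1 := by
  have hT : ⇑(L i * L j ^ n) ∘ e = e ∘ (of i * of j ^ n * ·) :=
    funext (mul_pow_apply_basis hL i j n)
  have hon : Orthonormal ℂ (⇑(L i * L j ^ n) ∘ e) :=
    hT ▸ e.orthonormal.comp _ (mul_right_injective _)
  exact opNorm_le_bound _ zero_le_one fun x => by rw [e.norm_map_of_orthonormal hon, one_mul]

theorem adjoint_mul_pow_apply_basis {i j : Fin d} {n : ℕ} {w : FreeMonoid (Fin d)}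
    (hw : w.length ≤ n) : adjoint (L i * L j ^ n) (e w) = 0 := by
  refine e.repr.map_eq_zero_iff.mp (lp.ext (funext fun u => ?_))
  rw [e.repr_apply_apply, adjoint_inner_right, mul_pow_apply_basis hL]
  refine (e.orthonormal.2 fun h => ?_).trans (by simp)
  have := congrArg length h
  simp only [length_mul, length_of, length_pow] at this
  omega

theorem tendsto_inner_mul_pow (i j : Fin d) (x y : F) :
    Tendsto (fun n => ⟪(L i * L j ^ n) x, y⟫_ℂ) atTop (𝓝 0) := by
  have hadj : Tendsto (fun n => adjoint (L i * L j ^ n) y) atTop (𝓝 0) := by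
    refine tendsto_nhds_zero_of_dense_span (C := 1)
      (fun n => by rw [LinearIsometryEquiv.norm_map]; exact norm_mul_pow_le_one hL i j n)
      (Submodule.dense_iff_topologicalClosure_eq_top.mpr e.dense_span) ?_ y
    rintro _ ⟨w, rfl⟩
    exact tendsto_atTop_of_eventually_const fun n hn => adjoint_mul_pow_apply_basis hL hn
  simpa [adjoint_inner_right] using (tendsto_const_nhds (x := x)).inner (𝕜 := ℂ) hadj

theorem averagedCoeff_adjoint_mul_pow (i j : Fin d) (n N : ℕ) :
    averagedCoeff e i j N (adjoint (L i * L j ^ n)) = ((N - n : ℕ) : ℂ) / N := by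
  have hTH : (L i * L j ^ n) (∑ k ∈ range N, e (of j ^ k)) =
      ∑ k ∈ Ico n (N + n), e (of i * of j ^ k) := by
    have hshift := sum_Ico_add' (fun k => e (of i * of j ^ k)) 0 N n
    rw [zero_add] at hshift
    rw [← hshift, map_sum, range_eq_Ico]
    refine sum_congr rfl fun k _ => ?_
    rw [mul_pow_apply_basis hL, mul_assoc, ← pow_add, add_comm]
  rw [averagedCoeff_apply, adjoint_inner_right, hTH, (orthonormal_mul_pow i j).inner_sum_sum,
    div_eq_inv_mul, range_eq_Ico, Ico_inter_Ico, Nat.card_Ico]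
  congr 3 <;> omega

end Shift

end FreeShift

open FreeShift in
/-- Example 5.2 of the paper, packaged: for `d ≥ 2`, on the Fock space `F = ℓ²(F_d⁺)`
with left free shifts `L j`, there is a bounded linear functional `φ` on the free disc
operator system `S_d` (the norm closure of `{a + b* : a, b ∈ A_d}`, where `A_d` is the
norm-closed unital algebra generated by the shifts) such that `φ` annihilates `A_d`,
`φ((L₂ L₁ⁿ)*) = 1` for all `n ≥ 1`, while `L₂ L₁ⁿ → 0` in the weak operator topology.
In particular `φ` admits no weak-* continuous extension to the weak-* closure of `S_d`.
(The generators `L₁, L₂` of the paper are `L ⟨0, _⟩, L ⟨1, _⟩`.) -/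
theorem stmt_8 (d : ℕ) (hd : 2 ≤ d)
    (F : Type*) [NormedAddCommGroup F] [InnerProductSpace ℂ F] [CompleteSpace F]
    (e : HilbertBasis (FreeMonoid (Fin d)) ℂ F)
    (L : Fin d → F →L[ℂ] F)
    (hL : ∀ (j : Fin d) (w : FreeMonoid (Fin d)), L j (e w) = e (FreeMonoid.of j * w)) :
    ∃ φ : ↥((Submodule.span ℂ
        {x : F →L[ℂ] F | ∃ a ∈ (Algebra.adjoin ℂ (Set.range L)).topologicalClosure,
          ∃ b ∈ (Algebra.adjoin ℂ (Set.range L)).topologicalClosure,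
          x = a + star b}).topologicalClosure) →L[ℂ] ℂ,
      (∀ (a : F →L[ℂ] F), a ∈ (Algebra.adjoin ℂ (Set.range L)).topologicalClosure →
        ∀ ha : a ∈ (Submodule.span ℂ
          {x : F →L[ℂ] F | ∃ a ∈ (Algebra.adjoin ℂ (Set.range L)).topologicalClosure,
            ∃ b ∈ (Algebra.adjoin ℂ (Set.range L)).topologicalClosure,
            x = a + star b}).topologicalClosure,
          φ ⟨a, ha⟩ = 0) ∧
      (∀ n : ℕ, 1 ≤ n →
        ∀ h : star (L ⟨1, by omega⟩ * (L ⟨0, by omega⟩) ^ n) ∈ (Submodule.span ℂ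
          {x : F →L[ℂ] F | ∃ a ∈ (Algebra.adjoin ℂ (Set.range L)).topologicalClosure,
            ∃ b ∈ (Algebra.adjoin ℂ (Set.range L)).topologicalClosure,
            x = a + star b}).topologicalClosure,
          φ ⟨star (L ⟨1, by omega⟩ * (L ⟨0, by omega⟩) ^ n), h⟩ = 1) ∧
      (∀ x y : F,
        Tendsto (fun n : ℕ => (inner ℂ ((L ⟨1, by omega⟩ * (L ⟨0, by omega⟩) ^ n) x) y : ℂ))
          atTop (nhds 0)) := by
  obtain ⟨φ, hφ⟩ := StrongDual.exists_eq_of_tendsto_of_norm_le (l := atTop)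
    (averagedCoeff e ⟨1, by omega⟩ ⟨0, by omega⟩) (norm_averagedCoeff_le _ _)
  refine ⟨φ.comp (Submodule.subtypeL _), fun a ha _ => ?_, fun n _ _ => ?_,
    tendsto_inner_mul_pow hL _ _⟩
  · refine hφ a 0 (tendsto_const_nhds.congr fun N => ?_)
    exact (averagedCoeff_eq_zero hL (by simp [Fin.ext_iff]) ha N).symm
  · refine hφ (star (L ⟨1, by omega⟩ * L ⟨0, by omega⟩ ^ n)) 1 ?_
    simpa only [ContinuousLinearMap.star_eq_adjoint, averagedCoeff_adjoint_mul_pow hL]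
      using tendsto_natCast_sub_div_atTop (𝕜 := ℂ) n
end

section
/- Let d ≥ 1 be an integer, let V_1, …, V_d be isometries with pairwise orthogonal ranges on a complex Hilbert space H, and let A ⊆ B(H) be the unital C*-subalgebra they generate. Let K ⊆ H be a closed subspace with orthogonal projection P_K, and suppose that each compression W_j = P_K V_j|_K is an isometry of K and that Σ_{j=1}^d W_j W_j* = I_K. Then K is reducing for A: tK ⊆ K and t*K ⊆ K for every t ∈ A. -/
/-!
The generators `Vⱼ` already leave `K` invariant: `‖P Vⱼ x‖ = ‖x‖ = ‖Vⱼ x‖` forces `Vⱼ x ∈ K` by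
Pythagoras. Then `x = ∑ⱼ Vⱼ P Vⱼ* x` for `x ∈ K`, and applying `Vᵢ*` together with
`Vᵢ* Vⱼ = δᵢⱼ` gives `Vᵢ* x = P Vᵢ* x ∈ K`. The operators `t` with `t K ⊆ K` and `t* K ⊆ K` form a
closed star subalgebra, so it contains the C*-algebra generated by the `Vⱼ`.
-/

open Set

namespace Submodule

variable {𝕜 E : Type*} [RCLike 𝕜] [NormedAddCommGroup E] [InnerProductSpace 𝕜 E]
  {K : Submodule 𝕜 E} {P : E → E}

theorem apply_eq_self_of_mem (hP : ∀ x, P x ∈ K ∧ x - P x ∈ Kᗮ) {x : E} (hx : x ∈ K) :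
    P x = x := by
  have hzero : x - P x = 0 :=
    disjoint_def.mp K.orthogonal_disjoint _ (K.sub_mem hx (hP x).1) (hP x).2
  exact (sub_eq_zero.mp hzero).symm

theorem mem_of_norm_apply_eq (hP : ∀ x, P x ∈ K ∧ x - P x ∈ Kᗮ) {y : E} (hy : ‖P y‖ = ‖y‖) :
    y ∈ K := by
  have hpyth : ‖y‖ * ‖y‖ = ‖P y‖ * ‖P y‖ + ‖y - P y‖ * ‖y - P y‖ := by
    simpa using norm_add_sq_eq_norm_sq_add_norm_sq_of_inner_eq_zero (P y) (y - P y)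
      (inner_right_of_mem_orthogonal (hP y).1 (hP y).2)
  have hzero : y - P y = 0 := by
    rw [hy] at hpyth
    exact norm_eq_zero.mp (mul_self_eq_zero.mp (by linarith))
  rw [sub_eq_zero.mp hzero]
  exact (hP y).1

variable [CompleteSpace E]

variable (K) in
def reducingStarSubalgebra : StarSubalgebra 𝕜 (E →L[𝕜] E) where
  carrier := {t | MapsTo t K K ∧ MapsTo ⇑(star t) K K}
  mul_mem' := by
    rintro a b ⟨ha, ha'⟩ ⟨hb, hb'⟩
    exact ⟨ha.comp hb, by rw [star_mul]; exact hb'.comp ha'⟩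
  add_mem' := by
    rintro a b ⟨ha, ha'⟩ ⟨hb, hb'⟩
    exact ⟨fun x hx => K.add_mem (ha hx) (hb hx),
      fun x hx => by simpa using K.add_mem (ha' hx) (hb' hx)⟩
  algebraMap_mem' c :=
    ⟨fun x hx => by simpa [Algebra.algebraMap_eq_smul_one] using K.smul_mem c hx,
     fun x hx => by
      simpa [Algebra.algebraMap_eq_smul_one, star_smul] using K.smul_mem (starRingEnd 𝕜 c) hx⟩
  star_mem' := by
    rintro a ⟨ha, ha'⟩
    exact ⟨ha', by simpa using ha⟩

theorem mem_reducingStarSubalgebra {t : E →L[𝕜] E} :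
    t ∈ K.reducingStarSubalgebra ↔ MapsTo t K K ∧ MapsTo ⇑(star t) K K :=
  Iff.rfl

theorem isClosed_reducingStarSubalgebra (hK : IsClosed (K : Set E)) :
    IsClosed (K.reducingStarSubalgebra : Set (E →L[𝕜] E)) := by
  have hinv : IsClosed {t : E →L[𝕜] E | MapsTo t K K} :=
    hK.setOfPred_mapsTo fun x _ => (ContinuousLinearMap.apply 𝕜 E x).continuous
  exact hinv.inter (hinv.preimage continuous_star)

end Submodule

namespace ContinuousLinearMap

variable {𝕜 E ι : Type*} [RCLike 𝕜] [NormedAddCommGroup E] [InnerProductSpace 𝕜 E]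
  [CompleteSpace E] [DecidableEq ι] {V : ι → E →L[𝕜] E}
  {K : Submodule 𝕜 E} {P : E → E}

theorem mapsTo_of_norm_compression_eq (hP : ∀ x, P x ∈ K ∧ x - P x ∈ Kᗮ) {T : E →L[𝕜] E}
    (hT : star T * T = 1) (hW : ∀ x ∈ K, ‖P (T x)‖ = ‖x‖) : MapsTo T K K := fun x hx =>
  Submodule.mem_of_norm_apply_eq hP (by rw [hW x hx, (norm_map_iff_adjoint_comp_self T).mpr hT])

theorem star_apply_apply_of_row_isometry (horth : ∀ i j, star (V i) * V j = if i = j then 1 else 0)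
    (i j : ι) (x : E) : star (V i) (V j x) = if i = j then x else 0 := by
  rw [← mul_apply_eq_comp, horth i j]
  split_ifs <;> rfl

theorem mapsTo_star_of_cuntz [Fintype ι] (horth : ∀ i j, star (V i) * V j = if i = j then 1 else 0)
    (hP : ∀ x, P x ∈ K ∧ x - P x ∈ Kᗮ) (hVK : ∀ j, MapsTo (V j) K K)
    (hcuntz : ∀ x ∈ K, ∑ j, P (V j (P (star (V j) x))) = x) (i : ι) :
    MapsTo ⇑(star (V i)) K K := by
  intro x hx
  have hsum : ∑ j, V j (P (star (V j) x)) = x := by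
    conv_rhs => rw [← hcuntz x hx]
    exact Finset.sum_congr rfl fun j _ =>
      (Submodule.apply_eq_self_of_mem hP (hVK j (hP _).1)).symm
  have hstar : star (V i) x = P (star (V i) x) := by
    conv_lhs => rw [← hsum]
    simp [map_sum, star_apply_apply_of_row_isometry horth]
  exact hstar ▸ (hP _).1

end ContinuousLinearMap

open ContinuousLinearMap Submodule in
theorem stmt_10_general (d : ℕ)
    (H : Type*) [NormedAddCommGroup H] [InnerProductSpace ℂ H] [CompleteSpace H]
    (V : Fin d → H →L[ℂ] H)
    (horth : ∀ i j : Fin d, star (V i) * V j = if i = j then 1 else 0)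
    (K : Submodule ℂ H) (hK : IsClosed (K : Set H))
    (P : H →L[ℂ] H)
    (hP : ∀ x : H, P x ∈ K ∧ x - P x ∈ Kᗮ)
    (hWiso : ∀ j : Fin d, ∀ x ∈ K, ‖P (V j x)‖ = ‖x‖)
    (hWcuntz : ∀ x ∈ K, ∑ j : Fin d, P (V j (P (star (V j) x))) = x) :
    ∀ t ∈ (StarAlgebra.adjoin ℂ (Set.range V)).topologicalClosure,
      (∀ x ∈ K, t x ∈ K) ∧ (∀ x ∈ K, star t x ∈ K) := by
  have hVK (j : Fin d) : MapsTo (V j) K K := by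
    have hiso : star (V j) * V j = 1 := by simpa using horth j j
    exact mapsTo_of_norm_compression_eq hP hiso (hWiso j)
  have hgen : StarAlgebra.adjoin ℂ (Set.range V) ≤ K.reducingStarSubalgebra := by
    rw [StarAlgebra.adjoin_le_iff]
    rintro _ ⟨j, rfl⟩
    exact ⟨hVK j, mapsTo_star_of_cuntz horth hP hVK hWcuntz j⟩
  exact fun t ht => mem_reducingStarSubalgebra.mp <|
    StarSubalgebra.topologicalClosure_minimal hgen (isClosed_reducingStarSubalgebra hK) ht

/-- The claim inside the proof of Lemma 4.3 of the paper: let `V₁, …, V_d` be isometries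
with pairwise orthogonal ranges on `H`, let `A` be the unital C*-algebra they generate
(formalized as the topological closure of the generated star-subalgebra), and let `K` be
a closed subspace with orthogonal projection `P` (characterized by `P x ∈ K` and
`x - P x ∈ Kᗮ`).  If each compression `W j = P V j |_K` is an isometry of `K` and
`∑ j, W j (W j)* = I_K` (the compressions form a Cuntz family on `K`), then `K` is
reducing for `A`: `t K ⊆ K` and `t* K ⊆ K` for every `t ∈ A`.  (Note
`(W j)* y = P (V j)* y` for `y ∈ K`, so the Cuntz identity reads as below.) -/
theorem stmt_10 (d : ℕ) (hd : 1 ≤ d)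
    (H : Type*) [NormedAddCommGroup H] [InnerProductSpace ℂ H] [CompleteSpace H]
    (V : Fin d → H →L[ℂ] H)
    (horth : ∀ i j : Fin d, star (V i) * V j = if i = j then 1 else 0)
    (K : Submodule ℂ H) (hK : IsClosed (K : Set H))
    (P : H →L[ℂ] H)
    (hP : ∀ x : H, P x ∈ K ∧ x - P x ∈ Kᗮ)
    (hWiso : ∀ j : Fin d, ∀ x ∈ K, ‖P (V j x)‖ = ‖x‖)
    (hWcuntz : ∀ x ∈ K, ∑ j : Fin d, P (V j (P (star (V j) x))) = x) :
    ∀ t ∈ (StarAlgebra.adjoin ℂ (Set.range V)).topologicalClosure,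
      (∀ x ∈ K, t x ∈ K) ∧ (∀ x ∈ K, star t x ∈ K) :=
  stmt_10_general d H V horth K hK P hP hWiso hWcuntz
end
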